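/- arXiv:2404.16277 — 2 statements merged into one kernel-verified Lean document; each statement's English description precedes it below -/
import Mathlib

section
/- Let m and o be positive natural numbers, w_c ∈ ℝ^m, γ ∈ ℝ^o, c > 0 and z_sup > 0, with ‖γ‖ ≤ c/(2·z_sup). Let (Ω, F, μ) be a probability space and let Z_c : Ω → ℝ^m, Z_e : Ω → ℝ^o, η : Ω → Bool be measurable with |⟨w_c, Z_c(ω)⟩| ≥ c and ‖Z_e(ω)‖ ≤ z_sup for all ω. Define the label Y(ω) = (decide(⟨w_c, Z_c(ω)⟩ ≥ 0)) XOR η(ω), the invariant classifier ĝ_0(ω) = decide(⟨w_c, Z_c(ω)⟩ ≥ 0), and the spurious classifier ĝ_γ(ω) = decide(⟨w_c, Z_c(ω)⟩ + ⟨γ, Z_e(ω)⟩ ≥ 0). Then for every ω ∈ Ω, Y(ω) ≠ ĝ_γ(ω) if and only if η(ω) = true; consequently μ{ω : Y(ω) ≠ ĝ_γ(ω)} = μ{ω : η(ω) = true} = μ{ω : Y(ω) ≠ ĝ_0(ω)}. -/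
open scoped RealInnerProductSpace
open MeasureTheory

/-! The margin `c` of the invariant score `⟪w_c, Z_c⟫` is twice the largest possible
perturbation `|⟪γ, Z_e⟫| ≤ ‖γ‖ z_sup ≤ c / 2`, so adding the spurious term never changes the
sign of the score: `ĝ_γ = ĝ_0`. Since `Y = ĝ_0 xor η`, both classifiers err exactly where
`η` flips the label. -/

theorem Bool.xor_ne_self_iff (b e : Bool) : xor b e ≠ b ↔ e = true := by
  cases b <;> cases e <;> decide

theorem nonneg_add_iff_of_abs_lt {s p : ℝ} (h : |p| < |s|) : 0 ≤ s + p ↔ 0 ≤ s := by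
  rcases le_or_gt 0 s with hs | hs
  · rw [abs_of_nonneg hs] at h
    exact iff_of_true (by linarith [neg_abs_le p]) hs
  · rw [abs_of_neg hs] at h
    exact iff_of_false (by linarith [le_abs_self p]) hs.not_ge

theorem abs_real_inner_le_of_norm_le_div {F : Type*} [SeminormedAddCommGroup F]
    [InnerProductSpace ℝ F] {x y : F} {a b : ℝ} (hb : 0 < b) (hx : ‖x‖ ≤ a / b)
    (hy : ‖y‖ ≤ b) : |⟪x, y⟫| ≤ a :=
  calc |⟪x, y⟫| ≤ ‖x‖ * ‖y‖ := abs_real_inner_le_norm x y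
    _ ≤ a / b * b := mul_le_mul hx hy (norm_nonneg y) ((norm_nonneg x).trans hx)
    _ = a := div_mul_cancel₀ a hb.ne'

theorem spurious_classifier_risk_general (m o : ℕ)
    (w_c : EuclideanSpace ℝ (Fin m)) (γ : EuclideanSpace ℝ (Fin o))
    (c z_sup : ℝ) (hc : 0 < c) (hz : 0 < z_sup)
    (hγ : ‖γ‖ ≤ c / (2 * z_sup))
    (Ω : Type*) [MeasurableSpace Ω] (μ : Measure Ω)
    (Z_c : Ω → EuclideanSpace ℝ (Fin m)) (Z_e : Ω → EuclideanSpace ℝ (Fin o)) (η : Ω → Bool)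
    (hmargin : ∀ ω, |⟪w_c, Z_c ω⟫| ≥ c) (hbound : ∀ ω, ‖Z_e ω‖ ≤ z_sup) :
    (∀ ω,
      (xor (decide ((0:ℝ) ≤ ⟪w_c, Z_c ω⟫)) (η ω)
          ≠ decide ((0:ℝ) ≤ ⟪w_c, Z_c ω⟫ + ⟪γ, Z_e ω⟫)) ↔ η ω = true) ∧
    μ {ω | xor (decide ((0:ℝ) ≤ ⟪w_c, Z_c ω⟫)) (η ω)
          ≠ decide ((0:ℝ) ≤ ⟪w_c, Z_c ω⟫ + ⟪γ, Z_e ω⟫)}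
      = μ {ω | η ω = true} ∧
    μ {ω | η ω = true}
      = μ {ω | xor (decide ((0:ℝ) ≤ ⟪w_c, Z_c ω⟫)) (η ω)
          ≠ decide ((0:ℝ) ≤ ⟪w_c, Z_c ω⟫)} := by
  have same_sign : ∀ ω, decide ((0:ℝ) ≤ ⟪w_c, Z_c ω⟫ + ⟪γ, Z_e ω⟫)
      = decide ((0:ℝ) ≤ ⟪w_c, Z_c ω⟫) := fun ω ↦ by
    have perturbation_small : |⟪γ, Z_e ω⟫| ≤ c / 2 := by
      refine abs_real_inner_le_of_norm_le_div hz ?_ (hbound ω)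
      rwa [div_div]
    exact decide_eq_decide.mpr <|
      nonneg_add_iff_of_abs_lt (by linarith [hmargin ω])
  have err_iff : ∀ ω, (xor (decide ((0:ℝ) ≤ ⟪w_c, Z_c ω⟫)) (η ω)
      ≠ decide ((0:ℝ) ≤ ⟪w_c, Z_c ω⟫ + ⟪γ, Z_e ω⟫)) ↔ η ω = true := fun ω ↦ by
    rw [same_sign ω]
    exact Bool.xor_ne_self_iff _ _
  refine ⟨err_iff, ?_, ?_⟩
  · exact congrArg μ (Set.ext err_iff)
  · exact congrArg μ (Set.ext fun ω ↦ (Bool.xor_ne_self_iff _ _).symm)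

/-- The spurious classifier `ĝ_γ` misclassifies exactly on the label-noise event,
so its risk equals the noise rate, which is also the risk of the invariant classifier `ĝ_0`. -/
theorem spurious_classifier_risk (m o : ℕ) (hm : 0 < m) (ho : 0 < o)
    (w_c : EuclideanSpace ℝ (Fin m)) (γ : EuclideanSpace ℝ (Fin o))
    (c z_sup : ℝ) (hc : 0 < c) (hz : 0 < z_sup)
    (hγ : ‖γ‖ ≤ c / (2 * z_sup))
    (Ω : Type*) [MeasurableSpace Ω] (μ : Measure Ω) [IsProbabilityMeasure μ]
    (Z_c : Ω → EuclideanSpace ℝ (Fin m)) (Z_e : Ω → EuclideanSpace ℝ (Fin o)) (η : Ω → Bool)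
    (hZc : Measurable Z_c) (hZe : Measurable Z_e) (hη : Measurable η)
    (hmargin : ∀ ω, |⟪w_c, Z_c ω⟫| ≥ c) (hbound : ∀ ω, ‖Z_e ω‖ ≤ z_sup) :
    (∀ ω,
      (xor (decide ((0:ℝ) ≤ ⟪w_c, Z_c ω⟫)) (η ω)
          ≠ decide ((0:ℝ) ≤ ⟪w_c, Z_c ω⟫ + ⟪γ, Z_e ω⟫)) ↔ η ω = true) ∧
    μ {ω | xor (decide ((0:ℝ) ≤ ⟪w_c, Z_c ω⟫)) (η ω)
          ≠ decide ((0:ℝ) ≤ ⟪w_c, Z_c ω⟫ + ⟪γ, Z_e ω⟫)}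
      = μ {ω | η ω = true} ∧
    μ {ω | η ω = true}
      = μ {ω | xor (decide ((0:ℝ) ≤ ⟪w_c, Z_c ω⟫)) (η ω)
          ≠ decide ((0:ℝ) ≤ ⟪w_c, Z_c ω⟫)} :=
  spurious_classifier_risk_general m o w_c γ c z_sup hc hz hγ Ω μ Z_c Z_e η hmargin hbound
end

section
/- (ERM places nonzero weight on the spurious feature; population version of the simulated SCM, Equation 5 and Table 1.) Let (Ω, F, μ) be a probability space and let Z_c, η_y, η_e : Ω → ℝ be mutually independent, square-integrable, mean-zero random variables with variances σ² > 0, σ_y² > 0 and s² > 0 respectively. Define Y = Z_c + η_y and Z_e = Y + η_e. Then the function (a, b) ↦ E_μ[(Y − a·Z_c − b·Z_e)²] has a unique minimizer (a*, b*) ∈ ℝ², given by a* = s²/(σ_y² + s²) and b* = σ_y²/(σ_y² + s²); in particular b* > 0 and a* < 1, so the population least-squares (ERM) solution places strictly positive weight on the spurious feature Z_e, whereas the oracle predictor uses only Z_c with coefficient 1. -/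
/-!
Since `Y - a Z_c - b Z_e = (1 - a - b) Z_c + (1 - b) η_y - b η_e` and the three sources are
uncorrelated, the risk is `σ² (1 - a - b)² + σ_y² (1 - b)² + s² b²`. Completing the square in `b`
writes it as `σ² (1 - a - b)² + (σ_y² + s²) (b - b*)² + σ_y² s² / (σ_y² + s²)`, which is minimal
exactly when `b = b*` and `a + b = 1`.
-/

open MeasureTheory ProbabilityTheory

namespace MeasureTheory

variable {Ω ι : Type*} [MeasurableSpace Ω] {μ : Measure Ω}

theorem integral_sq_sum_mul_eq_of_orthogonal (s : Finset ι) (X : ι → Ω → ℝ) (c : ι → ℝ)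
    (hX : ∀ i ∈ s, MemLp (X i) 2 μ)
    (horth : ∀ i ∈ s, ∀ j ∈ s, i ≠ j → ∫ ω, X i ω * X j ω ∂μ = 0) :
    ∫ ω, (∑ i ∈ s, c i * X i ω) ^ 2 ∂μ = ∑ i ∈ s, c i ^ 2 * ∫ ω, X i ω ^ 2 ∂μ := by
  have hint : ∀ i ∈ s, ∀ j ∈ s, Integrable (fun ω => c i * c j * (X i ω * X j ω)) μ :=
    fun i hi j hj => ((hX i hi).integrable_mul (hX j hj)).const_mul _
  have hexpand (ω : Ω) : (∑ i ∈ s, c i * X i ω) ^ 2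
      = ∑ i ∈ s, ∑ j ∈ s, c i * c j * (X i ω * X j ω) := by
    rw [sq, Finset.sum_mul_sum]
    exact Finset.sum_congr rfl fun i _ => Finset.sum_congr rfl fun j _ => by ring
  simp_rw [hexpand]
  rw [integral_finsetSum _ fun i hi => integrable_finsetSum _ (hint i hi)]
  refine Finset.sum_congr rfl fun i hi => ?_
  rw [integral_finsetSum _ (hint i hi), Finset.sum_eq_single_of_mem i hi fun j hj hji => by
    rw [integral_const_mul, horth i hi j hj hji.symm, mul_zero], integral_const_mul]
  simp only [sq]

end MeasureTheory

theorem ProbabilityTheory.IndepFun.integral_mul_eq_zero_of_integral_eq_zero_left {Ω : Type*}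
    [MeasurableSpace Ω] {μ : Measure Ω} {X Y : Ω → ℝ} (hXY : IndepFun X Y μ)
    (hX : AEStronglyMeasurable X μ) (hY : AEStronglyMeasurable Y μ) (hX0 : ∫ ω, X ω ∂μ = 0) :
    ∫ ω, X ω * Y ω ∂μ = 0 := by
  rw [hXY.integral_fun_mul_eq_mul_integral hX hY, hX0, zero_mul]

/-- `E[(Y - a Z_c - b Z_e)²]` when `Z_c, η_y, η_e` are uncorrelated with second moments
`A, B, C`. -/
def leastSquaresRisk (A B C a b : ℝ) : ℝ := A * (1 - a - b) ^ 2 + B * (1 - b) ^ 2 + C * b ^ 2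

section LeastSquaresRisk

variable {A B C : ℝ}

theorem leastSquaresRisk_eq (hBC : B + C ≠ 0) (a b : ℝ) :
    leastSquaresRisk A B C a b
      = A * (1 - a - b) ^ 2 + (B + C) * (b - B / (B + C)) ^ 2 + B * C / (B + C) := by
  unfold leastSquaresRisk
  field_simp
  ring

theorem one_sub_div_sub_div_eq_zero (hBC : B + C ≠ 0) : 1 - C / (B + C) - B / (B + C) = 0 := by
  field_simp
  ring

theorem leastSquaresRisk_optimum (hBC : B + C ≠ 0) :
    leastSquaresRisk A B C (C / (B + C)) (B / (B + C)) = B * C / (B + C) := by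
  rw [leastSquaresRisk_eq hBC, one_sub_div_sub_div_eq_zero hBC, sub_self]
  ring

theorem leastSquaresRisk_optimum_le (hA : 0 ≤ A) (hBC : 0 < B + C) (a b : ℝ) :
    leastSquaresRisk A B C (C / (B + C)) (B / (B + C)) ≤ leastSquaresRisk A B C a b := by
  rw [leastSquaresRisk_optimum hBC.ne', leastSquaresRisk_eq hBC.ne']
  have : 0 ≤ A * (1 - a - b) ^ 2 + (B + C) * (b - B / (B + C)) ^ 2 := by positivity
  linarith

theorem eq_of_leastSquaresRisk_le_optimum (hA : 0 < A) (hBC : 0 < B + C) {a b : ℝ}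
    (h : leastSquaresRisk A B C a b ≤ leastSquaresRisk A B C (C / (B + C)) (B / (B + C))) :
    a = C / (B + C) ∧ b = B / (B + C) := by
  rw [leastSquaresRisk_optimum hBC.ne', leastSquaresRisk_eq hBC.ne'] at h
  have hzero : A * (1 - a - b) ^ 2 + (B + C) * (b - B / (B + C)) ^ 2 = 0 :=
    le_antisymm (by linarith) (by positivity)
  obtain ⟨hA0, hBC0⟩ := (add_eq_zero_iff_of_nonneg (by positivity) (by positivity)).mp hzero
  have hsum : 1 - a - b = 0 := by simpa [hA.ne'] using hA0
  have hb : b = B / (B + C) := by simpa [hBC.ne', sub_eq_zero] using hBC0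
  refine ⟨?_, hb⟩
  linarith [one_sub_div_sub_div_eq_zero hBC.ne']

end LeastSquaresRisk

theorem erm_spurious_weight_general
    {Ω : Type*} [MeasurableSpace Ω] (μ : Measure Ω)
    (Z_c η_y η_e : Ω → ℝ)
    (hZc2 : MemLp Z_c 2 μ) (hηy2 : MemLp η_y 2 μ) (hηe2 : MemLp η_e 2 μ)
    (hZcMean : ∫ ω, Z_c ω ∂μ = 0) (hηyMean : ∫ ω, η_y ω ∂μ = 0)
    (σ σ_y s : ℝ) (hσ : 0 < σ) (hσy : 0 < σ_y)
    (hVarZc : ∫ ω, (Z_c ω)^2 ∂μ = σ^2)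
    (hVarηy : ∫ ω, (η_y ω)^2 ∂μ = σ_y^2)
    (hVarηe : ∫ ω, (η_e ω)^2 ∂μ = s^2)
    (hindep₁ : IndepFun Z_c η_y μ)
    (hindep₂ : IndepFun (fun ω => (Z_c ω, η_y ω)) η_e μ) :
    (∀ p : ℝ × ℝ,
      (∫ ω, ((Z_c ω + η_y ω)
          - (s^2 / (σ_y^2 + s^2)) * Z_c ω
          - (σ_y^2 / (σ_y^2 + s^2)) * (Z_c ω + η_y ω + η_e ω))^2 ∂μ)
        ≤ ∫ ω, ((Z_c ω + η_y ω)
          - p.1 * Z_c ω - p.2 * (Z_c ω + η_y ω + η_e ω))^2 ∂μ) ∧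
    (∀ p : ℝ × ℝ,
      (∫ ω, ((Z_c ω + η_y ω)
          - p.1 * Z_c ω - p.2 * (Z_c ω + η_y ω + η_e ω))^2 ∂μ)
        ≤ (∫ ω, ((Z_c ω + η_y ω)
          - (s^2 / (σ_y^2 + s^2)) * Z_c ω
          - (σ_y^2 / (σ_y^2 + s^2)) * (Z_c ω + η_y ω + η_e ω))^2 ∂μ)
        → p = (s^2 / (σ_y^2 + s^2), σ_y^2 / (σ_y^2 + s^2))) ∧
    0 < σ_y^2 / (σ_y^2 + s^2) ∧ s^2 / (σ_y^2 + s^2) < 1 := by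
  have hZcηy := hindep₁.integral_mul_eq_zero_of_integral_eq_zero_left
    hZc2.aestronglyMeasurable hηy2.aestronglyMeasurable hZcMean
  have hZcηe : ∫ ω, Z_c ω * η_e ω ∂μ = 0 :=
    (hindep₂.comp measurable_fst measurable_id).integral_mul_eq_zero_of_integral_eq_zero_left
      hZc2.aestronglyMeasurable hηe2.aestronglyMeasurable hZcMean
  have hηyηe : ∫ ω, η_y ω * η_e ω ∂μ = 0 :=
    (hindep₂.comp measurable_snd measurable_id).integral_mul_eq_zero_of_integral_eq_zero_left
      hηy2.aestronglyMeasurable hηe2.aestronglyMeasurable hηyMean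
  have risk (a b : ℝ) :
      ∫ ω, ((Z_c ω + η_y ω) - a * Z_c ω - b * (Z_c ω + η_y ω + η_e ω))^2 ∂μ
        = leastSquaresRisk (σ^2) (σ_y^2) (s^2) a b := by
    have h := integral_sq_sum_mul_eq_of_orthogonal (μ := μ) Finset.univ ![Z_c, η_y, η_e]
      ![1 - a - b, 1 - b, -b] (by simp [Fin.forall_fin_succ, hZc2, hηy2, hηe2]) (by
        simp only [Finset.mem_univ, true_implies]
        intro i j hij
        fin_cases i <;> fin_cases j <;> simp_all [mul_comm])
    simp only [Fin.sum_univ_three, Matrix.cons_val, hVarZc, hVarηy, hVarηe] at h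
    calc _ = ∫ ω, ((1 - a - b) * Z_c ω + (1 - b) * η_y ω + -b * η_e ω) ^ 2 ∂μ := by
          congr 1 with ω; ring
      _ = _ := by rw [h, leastSquaresRisk]; ring
  have hBC : 0 < σ_y ^ 2 + s ^ 2 := by positivity
  refine ⟨fun p => ?_, fun p hp => ?_, by positivity, ?_⟩
  · rw [risk, risk]
    exact leastSquaresRisk_optimum_le (by positivity) hBC p.1 p.2
  · rw [risk, risk] at hp
    obtain ⟨ha, hb⟩ := eq_of_leastSquaresRisk_le_optimum (by positivity) hBC hp
    exact Prod.ext ha hb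
  · rw [div_lt_one hBC]
    linarith [pow_pos hσy 2]

/-- population ERM places nonzero weight on the spurious feature: in the
SCM `Y = Z_c + η_y`, `Z_e = Y + η_e` with mutually independent mean-zero square-integrable
noises of variances `σ², σ_y², s²`, the population least-squares objective
`(a, b) ↦ E[(Y − a·Z_c − b·Z_e)²]` has the unique minimizer
`(a*, b*) = (s²/(σ_y² + s²), σ_y²/(σ_y² + s²))`, with `b* > 0` and `a* < 1`. -/
theorem erm_spurious_weight
    {Ω : Type*} [MeasurableSpace Ω] (μ : Measure Ω) [IsProbabilityMeasure μ]
    (Z_c η_y η_e : Ω → ℝ)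
    (hZc : Measurable Z_c) (hηy : Measurable η_y) (hηe : Measurable η_e)
    (hZc2 : MemLp Z_c 2 μ) (hηy2 : MemLp η_y 2 μ) (hηe2 : MemLp η_e 2 μ)
    (hZcMean : ∫ ω, Z_c ω ∂μ = 0) (hηyMean : ∫ ω, η_y ω ∂μ = 0)
    (hηeMean : ∫ ω, η_e ω ∂μ = 0)
    (σ σ_y s : ℝ) (hσ : 0 < σ) (hσy : 0 < σ_y) (hs : 0 < s)
    (hVarZc : ∫ ω, (Z_c ω)^2 ∂μ = σ^2)
    (hVarηy : ∫ ω, (η_y ω)^2 ∂μ = σ_y^2)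
    (hVarηe : ∫ ω, (η_e ω)^2 ∂μ = s^2)
    (hindep₁ : IndepFun Z_c η_y μ)
    (hindep₂ : IndepFun (fun ω => (Z_c ω, η_y ω)) η_e μ) :
    (∀ p : ℝ × ℝ,
      (∫ ω, ((Z_c ω + η_y ω)
          - (s^2 / (σ_y^2 + s^2)) * Z_c ω
          - (σ_y^2 / (σ_y^2 + s^2)) * (Z_c ω + η_y ω + η_e ω))^2 ∂μ)
        ≤ ∫ ω, ((Z_c ω + η_y ω)
          - p.1 * Z_c ω - p.2 * (Z_c ω + η_y ω + η_e ω))^2 ∂μ) ∧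
    (∀ p : ℝ × ℝ,
      (∫ ω, ((Z_c ω + η_y ω)
          - p.1 * Z_c ω - p.2 * (Z_c ω + η_y ω + η_e ω))^2 ∂μ)
        ≤ (∫ ω, ((Z_c ω + η_y ω)
          - (s^2 / (σ_y^2 + s^2)) * Z_c ω
          - (σ_y^2 / (σ_y^2 + s^2)) * (Z_c ω + η_y ω + η_e ω))^2 ∂μ)
        → p = (s^2 / (σ_y^2 + s^2), σ_y^2 / (σ_y^2 + s^2))) ∧
    0 < σ_y^2 / (σ_y^2 + s^2) ∧ s^2 / (σ_y^2 + s^2) < 1 :=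
  erm_spurious_weight_general μ Z_c η_y η_e hZc2 hηy2 hηe2 hZcMean hηyMean σ σ_y s hσ hσy hVarZc
    hVarηy hVarηe hindep₁ hindep₂
end
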